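/- arXiv:2502.04149 — 2 statements merged into one kernel-verified Lean document; each statement's English description precedes it below -/
import Mathlib

section
/- Let b > 1, let k ≥ 2 and let 𝕒 = a_1⋯a_{k−1} ∈ E_{k−1,d}. Then some suffix of 𝕒 of positive length is a prefix of 𝕔: there exists ℓ with 1 ≤ ℓ ≤ k−1 such that a_ℓ a_{ℓ+1}⋯a_{k−1} = c_1 c_2⋯c_{k−ℓ}. -/
/-- The beta transformation `T x = b x - ⌊b x⌋`. -/
noncomputable def bT (b : ℝ) (x : ℝ) : ℝ := b * x - ⌊b * x⌋

/-- `bdig b j x` is the `(j+1)`-th digit `d_{j+1}(x) = ⌊b · T^[j] x⌋` of the `b`-expansion. -/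
noncomputable def bdig (b : ℝ) (j : ℕ) (x : ℝ) : ℤ := ⌊b * (bT b)^[j] x⌋

/-- A block `a_0 ⋯ a_{n-1}` (0-indexed) is admissible if it consists of the
first `n` digits of the `b`-expansion of some `x ∈ [0,1)`. -/
def bAdm (b : ℝ) (n : ℕ) (a : ℕ → ℤ) : Prop :=
  ∃ x ∈ Set.Ico (0 : ℝ) 1, ∀ j < n, a j = bdig b j x

/-- The value `𝕒(b) = Σ_{k=1}^n a_k b^{-k}` of a block. -/
noncomputable def blockVal (b : ℝ) (n : ℕ) (a : ℕ → ℤ) : ℝ :=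
  ∑ j ∈ Finset.range n, (a j : ℝ) * b ^ (-((j : ℤ) + 1))

/-- `a ∈ E_{k-1,d}`: `a` is an admissible `(k-1)`-block and for some `j < k`
(1-indexed), the value of the block `a_j ⋯ a_{k-1} (d+1)` exceeds 1.
Here `a` is 0-indexed, so the suffix starts at a 0-indexed position `j < k-1`. -/
def memE (b : ℝ) (k : ℕ) (d : ℤ) (a : ℕ → ℤ) : Prop :=
  bAdm b (k - 1) a ∧ ∃ j < k - 1,
    1 < (∑ m ∈ Finset.range (k - 1 - j), (a (j + m) : ℝ) * b ^ (-((m : ℤ) + 1)))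
        + (d + 1 : ℝ) * b ^ (-((k - 1 - j : ℕ) : ℤ) - 1)

lemma bT_mem (b x : ℝ) : bT b x ∈ Set.Ico (0:ℝ) 1 := by
  have h : bT b x = Int.fract (b * x) := rfl
  rw [h]
  exact ⟨Int.fract_nonneg _, Int.fract_lt_one _⟩

lemma iter1_mem (b : ℝ) (n : ℕ) (x : ℝ) : (bT b)^[n+1] x ∈ Set.Ico (0:ℝ) 1 := by
  rw [Function.iterate_succ_apply']
  exact bT_mem _ _

lemma iter_mem (b : ℝ) (n : ℕ) (x : ℝ) (hx : x ∈ Set.Ico (0:ℝ) 1) :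
    (bT b)^[n] x ∈ Set.Ico (0:ℝ) 1 := by
  cases n with
  | zero => exact hx
  | succ n => exact iter1_mem b n x

lemma bdig_shift (b x : ℝ) (i m : ℕ) : bdig b m ((bT b)^[i] x) = bdig b (i+m) x := by
  unfold bdig
  rw [← Function.iterate_add_apply, Nat.add_comm]

lemma trunc_eq (b : ℝ) (hb : 1 < b) (x : ℝ) (n : ℕ) :
    x = (∑ m ∈ Finset.range n, (bdig b m x : ℝ) * b ^ (-(m:ℤ)-1))
        + b ^ (-(n:ℤ)) * (bT b)^[n] x := by
  have hb0 : (b:ℝ) ≠ 0 := by positivity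
  induction n with
  | zero => simp
  | succ n ih =>
    rw [Finset.sum_range_succ, Function.iterate_succ_apply']
    have h1 : b ^ (-((n+1:ℕ):ℤ)) * b = b ^ (-(n:ℤ)) := by
      rw [← zpow_add_one₀ hb0]
      congr 1
      push_cast
      ring
    have h2 : b ^ (-((n+1:ℕ):ℤ)) = b ^ (-(n:ℤ)-1) := by
      congr 1
      push_cast
      ring
    have h1' : b ^ (-(n:ℤ)-1) * b = b ^ (-(n:ℤ)) := by rw [← h2]; exact h1
    have hkey : ((bdig b n x : ℤ):ℝ) * b ^ (-(n:ℤ)-1)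
        + b ^ (-((n+1:ℕ):ℤ)) * bT b ((bT b)^[n] x) = b ^ (-(n:ℤ)) * (bT b)^[n] x := by
      rw [show bT b ((bT b)^[n] x) = b * (bT b)^[n] x - ⌊b * (bT b)^[n] x⌋ from rfl,
        show (bdig b n x : ℤ) = ⌊b * (bT b)^[n] x⌋ from rfl, h2]
      linear_combination ((bT b)^[n] x) * h1'
    linarith [ih, hkey]

lemma lex_mono (b : ℝ) (hb : 1 < b) (y z : ℝ) (hyz : y ≤ z) (i : ℕ)
    (hagree : ∀ m < i, bdig b m y = bdig b m z) : bdig b i y ≤ bdig b i z := by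
  by_contra hcon
  push_neg at hcon
  have hy := trunc_eq b hb y (i+1)
  have hz := trunc_eq b hb z (i+1)
  rw [Finset.sum_range_succ] at hy hz
  have hsame : ∑ m ∈ Finset.range i, (bdig b m y:ℝ) * b^(-(m:ℤ)-1)
      = ∑ m ∈ Finset.range i, (bdig b m z:ℝ) * b^(-(m:ℤ)-1) :=
    Finset.sum_congr rfl (fun m hm => by rw [hagree m (Finset.mem_range.mp hm)])
  have hb0 : (0:ℝ) < b := by linarith
  have hp : (0:ℝ) < b ^ (-(i:ℤ)-1) := by positivity
  have hq : (0:ℝ) < b ^ (-((i+1:ℕ):ℤ)) := by positivity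
  have hTy : 0 ≤ (bT b)^[i+1] y := (iter1_mem b i y).1
  have hTz : (bT b)^[i+1] z < 1 := (iter1_mem b i z).2
  have hdig : (bdig b i z : ℝ) + 1 ≤ (bdig b i y : ℝ) := by
    exact_mod_cast Int.add_one_le_iff.mpr hcon
  have h1 : ((bdig b i z : ℝ) + 1) * b ^ (-(i:ℤ)-1) ≤ (bdig b i y : ℝ) * b ^ (-(i:ℤ)-1) :=
    mul_le_mul_of_nonneg_right hdig hp.le
  have h2 : 0 ≤ b ^ (-((i+1:ℕ):ℤ)) * (bT b)^[i+1] y := mul_nonneg hq.le hTy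
  have h3 : b ^ (-((i+1:ℕ):ℤ)) * (bT b)^[i+1] z < b ^ (-((i+1:ℕ):ℤ)) * 1 :=
    mul_lt_mul_of_pos_left hTz hq
  have heq : b ^ (-((i+1:ℕ):ℤ)) = b ^ (-(i:ℤ)-1) := by
    congr 1; push_cast; ring
  rw [heq] at h2 h3 hy hz
  nlinarith [h1, h2, h3, hy, hz, hsame, hyz]

lemma exists_z (b : ℝ) (c : ℕ → ℤ)
    (hc : ∀ j, ∀ᶠ ε in nhdsWithin (0 : ℝ) (Set.Ioi 0), bdig b j (1 - ε) = c j)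
    (n : ℕ) (y : ℝ) (hy : y < 1) :
    ∃ z : ℝ, y < z ∧ z < 1 ∧ ∀ m < n, bdig b m z = c m := by
  have h1 : ∀ N : ℕ, ∀ᶠ ε in nhdsWithin (0 : ℝ) (Set.Ioi 0),
      ∀ m < N, bdig b m (1-ε) = c m := by
    intro N
    induction N with
    | zero => filter_upwards with ε m hm; omega
    | succ N ih =>
      filter_upwards [ih, hc N] with ε hε1 hε2 m hm
      rcases Nat.lt_succ_iff_lt_or_eq.mp hm with h | rfl
      · exact hε1 m h
      · exact hε2
  have h2 : ∀ᶠ ε in nhdsWithin (0 : ℝ) (Set.Ioi 0), ε < 1 - y := by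
    apply Filter.eventually_of_mem (nhdsWithin_le_nhds (Iio_mem_nhds (show (0:ℝ) < 1 - y by linarith)))
    exact fun x hx => hx
  have h3 : ∀ᶠ ε in nhdsWithin (0 : ℝ) (Set.Ioi 0), (0:ℝ) < ε := by
    apply Filter.eventually_of_mem self_mem_nhdsWithin
    exact fun x hx => hx
  obtain ⟨ε, hε1, hε2, hε3⟩ := ((h1 n).and (h2.and h3)).exists
  exact ⟨1 - ε, by linarith, by linarith, hε1⟩

lemma dle (b : ℝ) (hb : 1 < b) (c : ℕ → ℤ)
    (hc : ∀ j, ∀ᶠ ε in nhdsWithin (0 : ℝ) (Set.Ioi 0), bdig b j (1 - ε) = c j)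
    (d' : ℤ) (hd' : IsLeast {z : ℤ | ∃ j, c j = z} d') : (d':ℝ) ≤ b - 1 := by
  by_contra h
  push_neg at h
  have hb0 : (0:ℝ) < b := by linarith
  have hd'0 : (0:ℝ) < (d':ℝ) := by linarith
  have hr1 : b⁻¹ < 1 := inv_lt_one_of_one_lt₀ hb
  have hr0 : (0:ℝ) < b⁻¹ := by positivity
  obtain ⟨N, hN⟩ := exists_pow_lt_of_lt_one
    (div_pos (show (0:ℝ) < (d':ℝ) - (b-1) by linarith) hd'0) hr1
  have hN' : (d':ℝ) * b⁻¹ ^ N < (d':ℝ) - (b-1) := by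
    have := mul_lt_mul_of_pos_left hN hd'0
    rwa [mul_div_cancel₀ _ (ne_of_gt hd'0)] at this
  obtain ⟨z, hz0, hz1, hzd⟩ := exists_z b c hc N 0 one_pos
  have ht := trunc_eq b hb z N
  have hTN : 0 ≤ (bT b)^[N] z := by
    cases N with
    | zero => exact hz0.le
    | succ N => exact (iter1_mem b N z).1
  have hqN : (0:ℝ) < b ^ (-(N:ℤ)) := by positivity
  -- upper bound on truncation
  have hup : ∑ m ∈ Finset.range N, (bdig b m z:ℝ) * b^(-(m:ℤ)-1) < 1 := by
    nlinarith [mul_nonneg hqN.le hTN]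
  -- lower bound
  have hlow : (d':ℝ) * ∑ m ∈ Finset.range N, b^(-(m:ℤ)-1)
      ≤ ∑ m ∈ Finset.range N, (bdig b m z:ℝ) * b^(-(m:ℤ)-1) := by
    rw [Finset.mul_sum]
    apply Finset.sum_le_sum
    intro m hm
    have hcm : d' ≤ c m := hd'.2 ⟨m, rfl⟩
    have : (d':ℝ) ≤ (bdig b m z : ℝ) := by
      rw [hzd m (Finset.mem_range.mp hm)]; exact_mod_cast hcm
    exact mul_le_mul_of_nonneg_right this (by positivity)
  -- geometric telescoping
  have htel : (b-1) * ∑ m ∈ Finset.range N, b^(-(m:ℤ)-1) = 1 - b⁻¹ ^ N := by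
    have hterm : ∀ m : ℕ, (b-1) * b^(-(m:ℤ)-1) = b⁻¹^m - b⁻¹^(m+1) := by
      intro m
      have e1 : b ^ (-(m:ℤ)-1) = b⁻¹^(m+1) := by
        rw [show (-(m:ℤ)-1) = -((m+1:ℕ):ℤ) by push_cast; ring, zpow_neg, zpow_natCast,
          inv_pow]
      rw [e1, pow_succ]
      field_simp
    rw [Finset.mul_sum]
    calc ∑ m ∈ Finset.range N, (b-1) * b^(-(m:ℤ)-1)
        = ∑ m ∈ Finset.range N, (b⁻¹^m - b⁻¹^(m+1)) := Finset.sum_congr rfl (fun m _ => hterm m)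
      _ = b⁻¹^0 - b⁻¹^N := Finset.sum_range_sub' (fun m => b⁻¹^m) N
      _ = 1 - b⁻¹^N := by rw [pow_zero]
  set S := ∑ m ∈ Finset.range N, b^(-(m:ℤ)-1) with hS
  have h5 : (d':ℝ) * S < 1 := lt_of_le_of_lt hlow hup
  nlinarith [mul_lt_mul_of_pos_right h5 (show (0:ℝ) < b - 1 by linarith), htel, hN']

lemma key_lemma (b : ℝ) (hb : 1 < b) (c : ℕ → ℤ)
    (hc : ∀ j, ∀ᶠ ε in nhdsWithin (0 : ℝ) (Set.Ioi 0), bdig b j (1 - ε) = c j)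
    (d' : ℤ) (hd' : IsLeast {z : ℤ | ∃ j, c j = z} d')
    (d : ℤ) (hdd' : d ≤ d') :
    ∀ n : ℕ, ∀ y : ℝ, y ∈ Set.Ico (0:ℝ) 1 →
      1 < (∑ m ∈ Finset.range n, (bdig b m y : ℝ) * b ^ (-(m:ℤ)-1))
          + ((d:ℝ)+1) * b ^ (-(n:ℤ)-1) →
      ∃ p < n, ∀ m < n - p, bdig b (p+m) y = c m := by
  intro n
  induction n using Nat.strong_induction_on with
  | _ n IH =>
  intro y hy hsum
  have hb0 : (0:ℝ) < b := by linarith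
  have hd'b : (d':ℝ) ≤ b - 1 := dle b hb c hc d' hd'
  have hdb : (d:ℝ) + 1 ≤ b := by
    have : (d:ℝ) ≤ (d':ℝ) := by exact_mod_cast hdd'
    linarith
  rcases Nat.eq_zero_or_pos n with rfl | hn
  · exfalso
    rw [Finset.sum_range_zero,
      show (-((0:ℕ):ℤ)-1) = (-1 : ℤ) by norm_num, zpow_neg_one] at hsum
    have hle : ((d:ℝ)+1) * b⁻¹ ≤ 1 := by
      rw [← div_eq_mul_inv, div_le_one hb0]; exact hdb
    linarith
  · by_cases hall : ∀ m < n, bdig b m y = c m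
    · refine ⟨0, hn, fun m hm => ?_⟩
      simpa using hall m (by omega)
    · push_neg at hall
      classical
      have hex : ∃ m, m < n ∧ bdig b m y ≠ c m := hall
      obtain ⟨hin, hine⟩ := Nat.find_spec hex
      set i := Nat.find hex with hi
      have hagree : ∀ m < i, bdig b m y = c m := by
        intro m hm
        by_contra hne
        exact (Nat.find_min hex hm) ⟨by omega, hne⟩
      obtain ⟨z, hyz, hz1, hzd⟩ := exists_z b c hc n y hy.2
      have hilez : bdig b i y ≤ c i := by
        have h := lex_mono b hb y z hyz.le i
          (fun m hm => by rw [hagree m hm, ← hzd m (by omega)])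
        rwa [hzd i hin] at h
      have hile : (bdig b i y : ℝ) ≤ (bdig b i z : ℝ) - 1 := by
        have h2 : bdig b i y ≤ c i - 1 := by
          have := lt_of_le_of_ne hilez hine
          omega
        have h3 : bdig b i y ≤ bdig b i z - 1 := by rw [hzd i hin]; exact h2
        have h4 : (bdig b i y : ℝ) ≤ ((bdig b i z - 1 : ℤ) : ℝ) := by exact_mod_cast h3
        push_cast at h4
        linarith
      obtain ⟨n', hnii⟩ : ∃ n', n = (i+1) + n' := ⟨n - (i+1), by omega⟩
      have hP : (0:ℝ) < b ^ (-(i:ℤ)-1) := by positivity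
      have heqi : b ^ (-((i+1:ℕ):ℤ)) = b ^ (-(i:ℤ)-1) := by congr 1; push_cast; ring
      have hty := trunc_eq b hb y (i+1)
      have htz := trunc_eq b hb z (i+1)
      rw [Finset.sum_range_succ, heqi] at hty htz
      have hsame : ∑ m ∈ Finset.range i, (bdig b m y:ℝ) * b^(-(m:ℤ)-1)
          = ∑ m ∈ Finset.range i, (bdig b m z:ℝ) * b^(-(m:ℤ)-1) :=
        Finset.sum_congr rfl (fun m hm => by
          have hmi := Finset.mem_range.mp hm
          rw [hagree m hmi, ← hzd m (by omega)])
      have hTz : 0 ≤ (bT b)^[i+1] z := (iter1_mem b i z).1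
      have hTy : 0 ≤ (bT b)^[i+1] y := (iter1_mem b i y).1
      have hA : y - b ^ (-(i:ℤ)-1) * (bT b)^[i+1] y ≤ z - b ^ (-(i:ℤ)-1) := by
        nlinarith [hty, htz, hsame, mul_le_mul_of_nonneg_right hile hP.le,
          mul_nonneg hP.le hTz]
      have hB : 1 < y - b ^ (-(n:ℤ)) * (bT b)^[n] y + ((d:ℝ)+1) * b ^ (-(n:ℤ)-1) := by
        have ht := trunc_eq b hb y n
        linarith [hsum, ht]
      have hbne : b ≠ 0 := ne_of_gt hb0
      have hE1 : b ^ (-(n:ℤ)) = b ^ (-(i:ℤ)-1) * b ^ (-(n':ℤ)) := by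
        rw [← zpow_add₀ hbne]; congr 1; omega
      have hE2 : b ^ (-(n:ℤ)-1) = b ^ (-(i:ℤ)-1) * b ^ (-(n':ℤ)-1) := by
        rw [← zpow_add₀ hbne]; congr 1; omega
      have hw' : (bT b)^[n'] ((bT b)^[i+1] y) = (bT b)^[n] y := by
        rw [← Function.iterate_add_apply]; congr 1; omega
      have hty' := trunc_eq b hb ((bT b)^[i+1] y) n'
      rw [hw'] at hty'
      have hV : 1 < (∑ m ∈ Finset.range n', (bdig b m ((bT b)^[i+1] y) : ℝ) * b ^ (-(m:ℤ)-1))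
          + ((d:ℝ)+1) * b ^ (-(n':ℤ)-1) := by
        rw [hE1, hE2] at hB
        have h9 : b ^ (-(i:ℤ)-1) * 1 < b ^ (-(i:ℤ)-1) *
            (((bT b)^[i+1] y) - b ^ (-(n':ℤ)) * (bT b)^[n] y + ((d:ℝ)+1) * b ^ (-(n':ℤ)-1)) := by
          nlinarith [hA, hz1, hB]
        have h10 : 1 < ((bT b)^[i+1] y) - b ^ (-(n':ℤ)) * (bT b)^[n] y
            + ((d:ℝ)+1) * b ^ (-(n':ℤ)-1) := lt_of_mul_lt_mul_left h9 hP.le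
        linarith [hty']
      obtain ⟨p', hp', hmatch⟩ := IH n' (by omega) ((bT b)^[i+1] y) (iter1_mem b i y) hV
      refine ⟨i+1+p', by omega, fun m hm => ?_⟩
      have h1 := hmatch m (by omega)
      rw [bdig_shift] at h1
      rw [show (i+1+p')+m = (i+1)+(p'+m) by omega]
      exact h1

/-- If `𝕒 = a_1⋯a_{k-1} ∈ E_{k-1,d}`, then some suffix of `𝕒` of positive length is a
prefix of `𝕔` (the digitwise limit of the expansions of `1 - ε`): there is `ℓ` with
`1 ≤ ℓ ≤ k-1` (here 0-indexed: `ℓ < k-1`) such that `a_ℓ ⋯ a_{k-1} = c_1 ⋯ c_{k-ℓ}`. -/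
theorem stmt2 (b : ℝ) (hb : 1 < b) (k : ℕ) (hk : 2 ≤ k)
    (c : ℕ → ℤ)
    (hc : ∀ j, ∀ᶠ ε in nhdsWithin (0 : ℝ) (Set.Ioi 0), bdig b j (1 - ε) = c j)
    (d' : ℤ) (hd' : IsLeast {z : ℤ | ∃ j, c j = z} d')
    (d : ℤ) (hd0 : 0 ≤ d) (hdd' : d ≤ d')
    (a : ℕ → ℤ) (haE : memE b k d a) :
    ∃ ℓ < k - 1, ∀ m < k - 1 - ℓ, a (ℓ + m) = c m := by

  obtain ⟨⟨x, hx, hax⟩, j, hj, hsum⟩ := haE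
  have hy : (bT b)^[j] x ∈ Set.Ico (0:ℝ) 1 := iter_mem b j x hx
  have hsum' : 1 < (∑ m ∈ Finset.range (k-1-j),
      (bdig b m ((bT b)^[j] x) : ℝ) * b ^ (-(m:ℤ)-1))
      + ((d:ℝ)+1) * b ^ (-((k-1-j:ℕ):ℤ)-1) := by
    have he : ∀ m ∈ Finset.range (k-1-j),
        (a (j + m) : ℝ) * b ^ (-((m : ℤ) + 1))
        = (bdig b m ((bT b)^[j] x) : ℝ) * b ^ (-(m:ℤ)-1) := by
      intro m hm
      have hmlt := Finset.mem_range.mp hm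
      rw [bdig_shift, ← hax (j+m) (by omega)]
      congr 2
      ring
    rw [Finset.sum_congr rfl he] at hsum
    convert hsum using 2
  obtain ⟨p, hp, hmatch⟩ := key_lemma b hb c hc d' hd' d hdd' (k-1-j) ((bT b)^[j] x) hy hsum'
  refine ⟨j + p, by omega, fun m hm => ?_⟩
  have h1 := hmatch m (by omega)
  rw [bdig_shift] at h1
  rw [show (j+p)+m = j+(p+m) by omega, hax (j+(p+m)) (by omega)]
  exact h1
end

section
/- Let b > 1 and k ≥ 2. Let 𝕒 and 𝕓 be consecutive elements of 𝒟_A^{k−1} with 𝕒 <_lex 𝕓, and suppose 𝕒, 𝕓 ∈ E_{k−1,d}. Then 𝕓 has the form 𝕓 = b_1⋯b_{k'}00⋯0 (with k−k'−1 trailing zeros) for some k' < k−1 with b_{k'} ≠ 0, and 𝕒 = b_1⋯b_{k'−1}(b_{k'}−1)c_1⋯c_{k−k'−1}. Moreover, the longest suffix of 𝕒 that is a prefix of 𝕔 is c_1⋯c_{k−k'−1}, i.e. the suffix starting at position k'+1 of 𝕒. -/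
/-- Lexicographic order on blocks of length `n`. -/
def lexLt (n : ℕ) (a c : ℕ → ℤ) : Prop :=
  ∃ m < n, (∀ j < m, a j = c j) ∧ a m < c m

/-- Two admissible `n`-blocks are consecutive (with `a <_lex c`) if no admissible
`n`-block lies strictly between them. -/
def bConsecutive (b : ℝ) (n : ℕ) (a c : ℕ → ℤ) : Prop :=
  bAdm b n a ∧ bAdm b n c ∧ lexLt n a c ∧
    ¬ ∃ e : ℕ → ℤ, bAdm b n e ∧ lexLt n a e ∧ lexLt n e c

theorem bT_iterate_mem_Ico (b : ℝ) {x : ℝ} (hx : x ∈ Set.Ico (0 : ℝ) 1) (j : ℕ) :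
    (bT b)^[j] x ∈ Set.Ico (0 : ℝ) 1 := by
  cases j with
  | zero => exact hx
  | succ j =>
    rw [Function.iterate_succ_apply']
    exact ⟨Int.fract_nonneg _, Int.fract_lt_one _⟩

section Digits

variable {b : ℝ}

theorem blockVal_congr {L : ℕ} {w v : ℕ → ℤ} (h : ∀ j < L, w j = v j) :
    blockVal b L w = blockVal b L v :=
  Finset.sum_congr rfl fun j hj => by rw [h j (Finset.mem_range.1 hj)]

theorem bdig_nonneg (hb : 0 ≤ b) {x : ℝ} (hx : x ∈ Set.Ico (0 : ℝ) 1) (j : ℕ) :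
    0 ≤ bdig b j x :=
  Int.floor_nonneg.2 (mul_nonneg hb (bT_iterate_mem_Ico b hx j).1)

theorem bdig_add (i m : ℕ) (x : ℝ) : bdig b (i + m) x = bdig b m ((bT b)^[i] x) := by
  rw [bdig, bdig, add_comm, Function.iterate_add_apply]

theorem blockVal_bdig (hb : b ≠ 0) (x : ℝ) (L : ℕ) :
    blockVal b L (fun m => bdig b m x) = x - b ^ (-(L : ℤ)) * (bT b)^[L] x := by
  induction L with
  | zero => simp [blockVal]
  | succ L ih =>
    rw [blockVal, Finset.sum_range_succ, ← blockVal, ih, Function.iterate_succ_apply']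
    have hpow : b ^ (-((L : ℤ) + 1)) * b = b ^ (-(L : ℤ)) := by
      rw [← zpow_add_one₀ hb]; ring_nf
    simp only [bdig, bT]
    push_cast
    linear_combination (bT b)^[L] x * hpow

theorem bdig_mono (hb : 0 < b) {x y : ℝ} (hxy : x ≤ y) {i : ℕ}
    (hagree : ∀ j < i, bdig b j x = bdig b j y) : bdig b i x ≤ bdig b i y := by
  have hprefix : blockVal b i (fun m => bdig b m x) = blockVal b i (fun m => bdig b m y) :=
    blockVal_congr hagree
  rw [blockVal_bdig hb.ne', blockVal_bdig hb.ne'] at hprefix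
  have hT : (bT b)^[i] x ≤ (bT b)^[i] y := by
    have := zpow_pos hb (-(i : ℤ))
    nlinarith
  exact Int.floor_mono (mul_le_mul_of_nonneg_left hT hb.le)

end Digits

section BlockValues

variable {b : ℝ}

theorem blockVal_nonneg (hb : 0 < b) {L : ℕ} {w : ℕ → ℤ} (hw : ∀ j < L, 0 ≤ w j) :
    0 ≤ blockVal b L w :=
  Finset.sum_nonneg fun j hj =>
    mul_nonneg (by exact_mod_cast hw j (Finset.mem_range.1 hj)) (zpow_pos hb _).le

theorem blockVal_mono (hb : 0 < b) {L : ℕ} {w v : ℕ → ℤ} (h : ∀ j < L, w j ≤ v j) :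
    blockVal b L w ≤ blockVal b L v :=
  Finset.sum_le_sum fun j hj => mul_le_mul_of_nonneg_right
    (Int.cast_le.2 (h j (Finset.mem_range.1 hj))) (zpow_pos hb _).le

theorem blockVal_add (hb : b ≠ 0) (w : ℕ → ℤ) (A q : ℕ) :
    blockVal b (A + q) w
      = blockVal b A w + b ^ (-(A : ℤ)) * blockVal b q (fun m => w (A + m)) := by
  rw [blockVal, Finset.sum_range_add, blockVal, blockVal, Finset.mul_sum]
  congr 1
  refine Finset.sum_congr rfl fun m _ => ?_
  rw [mul_left_comm, ← zpow_add₀ hb]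
  push_cast
  ring_nf

/-- `(w_i ⋯ w_{n-1})(b)`, with `i` 0-indexed. -/
noncomputable def tailVal (b : ℝ) (n : ℕ) (w : ℕ → ℤ) (i : ℕ) : ℝ :=
  blockVal b (n - i) (fun m => w (i + m))

theorem tailVal_of_le {n i : ℕ} (w : ℕ → ℤ) (h : n ≤ i) : tailVal b n w i = 0 := by
  simp [tailVal, blockVal, Nat.sub_eq_zero_of_le h]

theorem mul_tailVal (hb : b ≠ 0) {n i : ℕ} (w : ℕ → ℤ) (hi : i < n) :
    b * tailVal b n w i = w i + tailVal b n w (i + 1) := by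
  rw [tailVal, show n - i = 1 + (n - (i + 1)) by omega, blockVal_add hb]
  simp only [blockVal, Finset.sum_range_one, add_zero, add_assoc, tailVal, CharP.cast_eq_zero,
    zero_add, Nat.cast_one, zpow_neg_one]
  field_simp

theorem tailVal_eq_add {n i p : ℕ} (hb : b ≠ 0) (w : ℕ → ℤ) (hip : i ≤ p) (hpn : p ≤ n) :
    tailVal b n w i
      = blockVal b (p - i) (fun m => w (i + m)) + b ^ (-((p - i : ℕ) : ℤ)) * tailVal b n w p := by
  rw [tailVal, show n - i = (p - i) + (n - p) by omega, blockVal_add hb, tailVal]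
  congr 3
  funext m
  congr 1
  omega

theorem tailVal_bdig (hb : b ≠ 0) (x : ℝ) {n i : ℕ} (hi : i ≤ n) :
    tailVal b n (fun j => bdig b j x) i
      = (bT b)^[i] x - b ^ (-((n - i : ℕ) : ℤ)) * (bT b)^[n] x := by
  simp only [tailVal, bdig_add, blockVal_bdig hb, ← Function.iterate_add_apply,
    Nat.sub_add_cancel hi]

end BlockValues

section Admissible

variable {b : ℝ} {n : ℕ}

theorem bAdm_iff (hb : 0 < b) {w : ℕ → ℤ} :
    bAdm b n w ↔ (∀ j < n, 0 ≤ w j) ∧ ∀ i < n, tailVal b n w i < 1 := by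
  constructor
  · rintro ⟨x, hx, hw⟩
    refine ⟨fun j hj => hw j hj ▸ bdig_nonneg hb.le hx j, fun i hi => ?_⟩
    have htail : tailVal b n w i = tailVal b n (fun j => bdig b j x) i :=
      blockVal_congr fun m hm => hw _ (by omega)
    rw [htail, tailVal_bdig hb.ne' x hi.le]
    have := mul_nonneg (zpow_pos hb (-((n - i : ℕ) : ℤ))).le (bT_iterate_mem_Ico b hx n).1
    linarith [(bT_iterate_mem_Ico b hx i).2]
  · rintro ⟨h0, h1⟩
    set z := tailVal b n w
    have hz_mem : ∀ i ≤ n, z i ∈ Set.Ico (0 : ℝ) 1 := fun i hi =>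
      ⟨blockVal_nonneg hb fun m hm => h0 _ (by omega),
        hi.lt_or_eq.elim (h1 i) fun h => by simp [z, tailVal_of_le w h.ge]⟩
    have hstep : ∀ i < n, ⌊b * z i⌋ = w i ∧ bT b (z i) = z (i + 1) := by
      intro i hi
      have hfloor : ⌊b * z i⌋ = w i := by
        rw [mul_tailVal hb.ne' w hi, Int.floor_intCast_add,
          Int.floor_eq_zero_iff.2 (hz_mem (i + 1) hi), add_zero]
      refine ⟨hfloor, ?_⟩
      rw [bT, hfloor, mul_tailVal hb.ne' w hi]
      ring
    have hiter : ∀ i ≤ n, (bT b)^[i] (z 0) = z i := by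
      intro i hi
      induction i with
      | zero => rfl
      | succ i ih => rw [Function.iterate_succ_apply', ih (by omega), (hstep i (by omega)).2]
    exact ⟨z 0, hz_mem 0 (Nat.zero_le n), fun j hj => by
      rw [bdig, hiter j hj.le, (hstep j hj).1]⟩

theorem bAdm_of_le (hb : 0 < b) {w v : ℕ → ℤ} (hv : bAdm b n v) (h0 : ∀ j < n, 0 ≤ w j)
    (hle : ∀ j < n, w j ≤ v j) : bAdm b n w :=
  (bAdm_iff hb).2 ⟨h0, fun i hi => (blockVal_mono hb fun m hm => hle _ (by omega)).trans_lt
    (((bAdm_iff hb).1 hv).2 i hi)⟩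

end Admissible

theorem lexLt_of_le_of_ne {n : ℕ} {w v : ℕ → ℤ} (hle : ∀ j < n, w j ≤ v j)
    (hne : ∃ j < n, w j ≠ v j) : lexLt n w v := by
  classical
  obtain ⟨hn, hwv⟩ := Nat.find_spec hne
  refine ⟨Nat.find hne, hn, fun j hj => ?_, (hle _ hn).lt_of_ne hwv⟩
  by_contra h
  exact Nat.find_min hne hj ⟨hj.trans hn, h⟩

theorem blockVal_const {b : ℝ} (hb : b ≠ 0) (d : ℤ) (L : ℕ) :
    (b - 1) * blockVal b L (fun _ => d) = d * (1 - b ^ (-(L : ℤ))) := by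
  induction L with
  | zero => simp [blockVal]
  | succ L ih =>
    have hpow : b * b ^ (-((L : ℤ) + 1)) = b ^ (-(L : ℤ)) := by
      rw [mul_comm, ← zpow_add_one₀ hb]; ring_nf
    rw [blockVal, Finset.sum_range_succ, ← blockVal, mul_add, ih]
    push_cast
    linear_combination (d : ℝ) * hpow

/-- The paper's `𝕔 = lim_{ε → 0⁺} 𝕕(1 - ε)`. -/
def IsQuasiGreedyExpansionOfOne (b : ℝ) (c : ℕ → ℤ) : Prop :=
  ∀ j, ∀ᶠ ε in nhdsWithin (0 : ℝ) (Set.Ioi 0), bdig b j (1 - ε) = c j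

namespace IsQuasiGreedyExpansionOfOne

variable {b : ℝ} {c : ℕ → ℤ}

theorem exists_eps (hc : IsQuasiGreedyExpansionOfOne b c) (L : ℕ) {δ : ℝ} (hδ : 0 < δ) :
    ∃ ε, 0 < ε ∧ ε < δ ∧ ∀ j < L, bdig b j (1 - ε) = c j := by
  have hdig : ∀ᶠ ε in nhdsWithin (0 : ℝ) (Set.Ioi 0), ∀ j ∈ Finset.range L,
      bdig b j (1 - ε) = c j :=
    (Filter.eventually_all_finset _).2 fun j _ => hc j
  have hsmall : ∀ᶠ ε in nhdsWithin (0 : ℝ) (Set.Ioi 0), ε < δ :=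
    (gt_mem_nhds hδ).filter_mono nhdsWithin_le_nhds
  obtain ⟨ε, hε, hεδ, hεpos⟩ := (hdig.and (hsmall.and self_mem_nhdsWithin)).exists
  exact ⟨ε, hεpos, hεδ, fun j hj => hε j (Finset.mem_range.2 hj)⟩

theorem prefix_bAdm (hc : IsQuasiGreedyExpansionOfOne b c) (L : ℕ) : bAdm b L c := by
  obtain ⟨ε, hε0, hε1, hε⟩ := hc.exists_eps L one_pos
  exact ⟨1 - ε, ⟨by linarith, by linarith⟩, fun j hj => (hε j hj).symm⟩

theorem nonneg (hb : 0 < b) (hc : IsQuasiGreedyExpansionOfOne b c) (j : ℕ) : 0 ≤ c j :=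
  ((bAdm_iff hb).1 (hc.prefix_bAdm (j + 1))).1 j j.lt_succ_self

theorem blockVal_lt_one (hb : 0 < b) (hc : IsQuasiGreedyExpansionOfOne b c) (i L : ℕ) :
    blockVal b L (fun m => c (i + m)) < 1 := by
  rcases L.eq_zero_or_pos with rfl | hL
  · simp [blockVal]
  · have := ((bAdm_iff hb).1 (hc.prefix_bAdm (i + L))).2 i (by omega)
    rwa [tailVal, Nat.add_sub_cancel_left] at this

theorem one_sub_le_blockVal (hb : 0 < b) (hc : IsQuasiGreedyExpansionOfOne b c) (r : ℕ) :
    1 - b ^ (-(r : ℤ)) ≤ blockVal b r c := by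
  refine le_of_forall_pos_lt_add fun δ hδ => ?_
  obtain ⟨ε, hε0, hεδ, hε⟩ := hc.exists_eps r (lt_min hδ one_pos)
  have hmem : 1 - ε ∈ Set.Ico (0 : ℝ) 1 := ⟨by linarith [min_le_right δ 1], by linarith⟩
  have hval : blockVal b r c = 1 - ε - b ^ (-(r : ℤ)) * (bT b)^[r] (1 - ε) := by
    rw [← blockVal_bdig hb.ne']
    exact blockVal_congr fun j hj => (hε j hj).symm
  have := mul_lt_mul_of_pos_left (bT_iterate_mem_Ico b hmem r).2 (zpow_pos hb (-(r : ℤ)))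
  linarith [min_le_left δ 1]

theorem bdig_le (hb : 0 < b) (hc : IsQuasiGreedyExpansionOfOne b c) {x : ℝ} (hx : x < 1)
    {m : ℕ} (hagree : ∀ j < m, bdig b j x = c j) : bdig b m x ≤ c m := by
  obtain ⟨ε, -, hεx, hε⟩ := hc.exists_eps (m + 1) (sub_pos.2 hx)
  rw [← hε m m.lt_succ_self]
  exact bdig_mono hb (by linarith) fun j hj => by rw [hagree j hj, hε j (by omega)]

theorem add_one_le (hb : 1 < b) (hc : IsQuasiGreedyExpansionOfOne b c) {d : ℤ}
    (hd : ∀ j, d ≤ c j) : (d : ℝ) + 1 ≤ b := by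
  have hb0 : 0 < b := one_pos.trans hb
  have hbound : ∀ L : ℕ, (d : ℝ) * (1 - b ^ (-(L : ℤ))) ≤ b - 1 := fun L => by
    rw [← blockVal_const hb0.ne']
    have hle := blockVal_mono hb0 (L := L) fun j _ => hd j
    have hlt := hc.blockVal_lt_one hb0 0 L
    simp only [zero_add] at hlt
    nlinarith
  have hlim : Filter.Tendsto (fun L : ℕ => (d : ℝ) * (1 - b ^ (-(L : ℤ)))) Filter.atTop
      (nhds ((d : ℝ) * (1 - 0))) := by
    simp only [zpow_neg, zpow_natCast]
    exact (tendsto_inv_atTop_zero.comp (tendsto_pow_atTop_atTop_of_one_lt hb)).const_sub 1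
      |>.const_mul _
  linarith [le_of_tendsto' hlim hbound]

end IsQuasiGreedyExpansionOfOne

section Consecutive

variable {b : ℝ} {n p : ℕ} {a a' c : ℕ → ℤ}

theorem bConsecutive.increment (hb : 0 < b) (hcons : bConsecutive b n a a') (hp : p < n)
    (hagree : ∀ j < p, a j = a' j) (hlt : a p < a' p) :
    a' p = a p + 1 ∧ ∀ j, p < j → j < n → a' j = 0 := by
  obtain ⟨ha, ha', -, hbetween⟩ := hcons
  have ha0 := ((bAdm_iff hb).1 ha).1
  have ha'0 := ((bAdm_iff hb).1 ha').1
  -- `e` is `a` truncated after position `p` and increased there; it lies between `a` and `a'`.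
  set e : ℕ → ℤ := fun j => if j < p then a j else if j = p then a p + 1 else 0
  have he0 : ∀ j < n, 0 ≤ e j := fun j hj => by
    simp only [e]; split_ifs <;> linarith [ha0 j hj, ha0 p hp]
  have hle : ∀ j < n, e j ≤ a' j := fun j hj => by
    rcases lt_trichotomy j p with h | rfl | h
    · simp [e, h, hagree j h]
    · simpa [e] using hlt
    · simp [e, h.ne', h.not_gt, ha'0 j hj]
  have heq : ∀ j < n, e j = a' j := by
    by_contra! hne
    exact hbetween ⟨e, bAdm_of_le hb ha' he0 hle,
      ⟨p, hp, fun j hj => by simp [e, hj], by simp [e]⟩, lexLt_of_le_of_ne hle hne⟩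
  refine ⟨by simpa [e] using (heq p hp).symm, fun j hpj hj => ?_⟩
  simpa [e, hpj.ne', hpj.not_gt] using (heq j hj).symm

theorem tailVal_eq_of_increment (hb : b ≠ 0) (hp : p < n) (hagree : ∀ j < p, a j = a' j)
    (hinc : a' p = a p + 1) (hzero : ∀ j, p < j → j < n → a' j = 0) {i : ℕ} (hi : i ≤ p) :
    tailVal b n a' i
      = tailVal b n a i + b ^ (-((p - i : ℕ) : ℤ) - 1) * (1 - tailVal b n a (p + 1)) := by
  have htail' : tailVal b n a' (p + 1) = 0 := by
    refine (Finset.sum_eq_zero fun m hm => ?_ : blockVal b _ _ = 0)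
    have := Finset.mem_range.1 hm
    simp [hzero (p + 1 + m) (by omega) (by omega)]
  have hhead : blockVal b (p - i) (fun m => a' (i + m)) = blockVal b (p - i) (fun m => a (i + m)) :=
    blockVal_congr fun m hm => (hagree _ (by omega)).symm
  have hstep' := mul_tailVal hb a' hp
  have hstep := mul_tailVal hb a hp
  rw [hinc, htail'] at hstep'
  push_cast at hstep'
  rw [tailVal_eq_add hb a' hi hp.le, tailVal_eq_add hb a hi hp.le, hhead, zpow_sub_one₀ hb]
  field_simp
  linear_combination b ^ (-((p - i : ℕ) : ℤ)) * (hstep' - hstep)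

theorem bAdm_splice (hb : 0 < b) (hc : IsQuasiGreedyExpansionOfOne b c) (ha : bAdm b n a)
    (ha' : bAdm b n a') (hp : p < n) (hagree : ∀ j < p, a j = a' j) (hinc : a' p = a p + 1)
    (hzero : ∀ j, p < j → j < n → a' j = 0) :
    bAdm b n (fun j => if j ≤ p then a j else c (j - (p + 1))) := by
  set e : ℕ → ℤ := fun j => if j ≤ p then a j else c (j - (p + 1))
  have hcp : ∀ j, p < j → e j = c (j - (p + 1)) := fun j hj => if_neg hj.not_ge
  refine (bAdm_iff hb).2 ⟨fun j hj => ?_, fun i hi => ?_⟩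
  · simp only [e]
    split_ifs
    exacts [((bAdm_iff hb).1 ha).1 j hj, hc.nonneg hb _]
  rcases lt_or_ge p i with hpi | hip
  · have htail : tailVal b n e i = blockVal b (n - i) (fun m => c (i - (p + 1) + m)) :=
      blockVal_congr fun m _ => by rw [hcp _ (by omega)]; congr 1; omega
    exact htail ▸ hc.blockVal_lt_one hb _ _
  · have he : tailVal b n e (p + 1) < 1 := by
      have htail : tailVal b n e (p + 1) = blockVal b (n - (p + 1)) (fun m => c (0 + m)) :=
        blockVal_congr fun m _ => by rw [hcp _ (by omega)]; congr 1; omega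
      exact htail ▸ hc.blockVal_lt_one hb _ _
    have hsplit := tailVal_eq_of_increment (a := e) hb.ne' hp
      (fun j hj => (if_pos hj.le).trans (hagree j hj)) (by simp [e, hinc]) hzero hip
    have := mul_pos (zpow_pos hb (-((p - i : ℕ) : ℤ) - 1)) (sub_pos.2 he)
    linarith [((bAdm_iff hb).1 ha').2 i hi]

theorem bConsecutive.eq_quasiGreedy (hb : 0 < b) (hc : IsQuasiGreedyExpansionOfOne b c)
    (hcons : bConsecutive b n a a') (hp : p < n) (hagree : ∀ j < p, a j = a' j)
    (hlt : a p < a' p) (m : ℕ) (hm : p + 1 + m < n) : a (p + 1 + m) = c m := by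
  induction m using Nat.strong_induction_on with
  | _ m ih =>
  obtain ⟨hinc, hzero⟩ := hcons.increment hb hp hagree hlt
  obtain ⟨x, hx, hxa⟩ := hcons.1
  refine le_antisymm ?_ (not_lt.1 fun hlt' => hcons.2.2.2 ⟨_,
    bAdm_splice hb hc hcons.1 hcons.2.1 hp hagree hinc hzero, ?_, ?_⟩)
  · rw [hxa _ hm, bdig_add]
    refine hc.bdig_le hb (bT_iterate_mem_Ico b hx _).2 fun j hj => ?_
    rw [← bdig_add, ← hxa _ (by omega), ih j hj (by omega)]
  · refine ⟨p + 1 + m, hm, fun j hj => ?_, by simpa [show ¬p + 1 + m ≤ p by omega] using hlt'⟩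
    dsimp only
    split_ifs with hjp
    · rfl
    · obtain ⟨j', rfl⟩ := Nat.exists_eq_add_of_le (not_le.1 hjp)
      simpa using ih j' (by omega) (by omega)
  · exact ⟨p, hp, fun j hj => by simp [hj.le, hagree j hj], by simpa using hlt⟩

theorem not_forall_eq_quasiGreedy_of_increment (hb : 0 < b)
    (hc : IsQuasiGreedyExpansionOfOne b c) (ha' : bAdm b n a') (hp : p < n)
    (hagree : ∀ j < p, a j = a' j) (hinc : a' p = a p + 1)
    (hzero : ∀ j, p < j → j < n → a' j = 0) {l : ℕ} (hl : l ≤ p) :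
    ¬ ∀ m, l + m < n → a (l + m) = c m := by
  intro hall
  have htail : tailVal b n a l = blockVal b ((p - l + 1) + (n - (p + 1))) c :=
    (blockVal_congr fun m hm => hall m (by omega)).trans (by congr 1; omega)
  have htail₁ : tailVal b n a (p + 1) = blockVal b (n - (p + 1)) (fun m => c (p - l + 1 + m)) :=
    blockVal_congr fun m _ => by rw [← hall _ (by omega)]; congr 1; omega
  have hsplit := tailVal_eq_of_increment hb.ne' hp hagree hinc hzero hl
  rw [htail, blockVal_add hb.ne', htail₁] at hsplit
  have hexp : (-((p - l : ℕ) : ℤ) - 1) = -((p - l + 1 : ℕ) : ℤ) := by push_cast; ring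
  rw [hexp] at hsplit
  linarith [hc.one_sub_le_blockVal hb (p - l + 1), ((bAdm_iff hb).1 ha').2 l (by omega)]

theorem succ_lt_of_memE {k : ℕ} {d : ℤ} (hb : 0 < b) (hd : (d : ℝ) + 1 ≤ b)
    (ha' : bAdm b (k - 1) a') (hp : p < k - 1) (hagree : ∀ j < p, a j = a' j)
    (hinc : a' p = a p + 1) (hzero : ∀ j, p < j → j < k - 1 → a' j = 0)
    (haE : memE b k d a) : p + 1 < k - 1 := by
  by_contra hlast
  obtain ⟨-, j, hj, hval⟩ := haE
  change 1 < tailVal b (k - 1) a j + _ at hval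
  have hsplit := tailVal_eq_of_increment hb.ne' hp hagree hinc hzero (i := j) (by omega)
  rw [tailVal_of_le a (by omega : k - 1 ≤ p + 1), sub_zero, mul_one,
    show p - j = k - 1 - j - 1 by omega] at hsplit
  have hpow : b * b ^ (-((k - 1 - j : ℕ) : ℤ) - 1) = b ^ (-((k - 1 - j - 1 : ℕ) : ℤ) - 1) := by
    rw [mul_comm, ← zpow_add_one₀ hb.ne']; congr 1; omega
  have := mul_le_mul_of_nonneg_right hd (zpow_pos hb (-((k - 1 - j : ℕ) : ℤ) - 1)).le
  linarith [((bAdm_iff hb).1 ha').2 j hj]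

end Consecutive

-- `p` is the 0-indexed position of the paper's `k'`, i.e. `k' = p + 1`.
theorem stmt3_general (b : ℝ) (hb : 1 < b) (k : ℕ)
    (c : ℕ → ℤ)
    (hc : ∀ j, ∀ᶠ ε in nhdsWithin (0 : ℝ) (Set.Ioi 0), bdig b j (1 - ε) = c j)
    (d' : ℤ) (hd' : IsLeast {z : ℤ | ∃ j, c j = z} d')
    (d : ℤ) (hdd' : d ≤ d')
    (a bb : ℕ → ℤ) (hcons : bConsecutive b (k - 1) a bb)
    (haE : memE b k d a) :
    ∃ p : ℕ, p + 1 < k - 1 ∧ bb p ≠ 0 ∧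
      (∀ j, p < j → j < k - 1 → bb j = 0) ∧
      (∀ j < p, a j = bb j) ∧ a p = bb p - 1 ∧
      (∀ m, p + 1 + m < k - 1 → a (p + 1 + m) = c m) ∧
      (∀ ℓ ≤ p, ¬ ∀ m, ℓ + m < k - 1 → a (ℓ + m) = c m) := by
  have hb0 : 0 < b := one_pos.trans hb
  have hc : IsQuasiGreedyExpansionOfOne b c := hc
  obtain ⟨p, hp, hagree, hlt⟩ := hcons.2.2.1
  obtain ⟨hinc, hzero⟩ := hcons.increment hb0 hp hagree hlt
  have hd : (d : ℝ) + 1 ≤ b := hc.add_one_le hb fun j => hdd'.trans (hd'.2 ⟨j, rfl⟩)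
  have ha0 : 0 ≤ a p := ((bAdm_iff hb0).1 hcons.1).1 p hp
  exact ⟨p, succ_lt_of_memE hb0 hd hcons.2.1 hp hagree hinc hzero haE, by omega, hzero, hagree,
    by omega, hcons.eq_quasiGreedy hb0 hc hp hagree hlt,
    fun l hl => not_forall_eq_quasiGreedy_of_increment hb0 hc hcons.2.1 hp hagree hinc hzero hl⟩

/-- Let `𝕒 <_lex 𝕓` be consecutive admissible `(k-1)`-blocks, both in `E_{k-1,d}`.
Then (writing `p` for the 0-indexed position of the 1-indexed `k'`, so `k' = p+1`)
`𝕓 = b_1⋯b_{k'}0⋯0` with `k' < k-1` and `b_{k'} ≠ 0`,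
`𝕒 = b_1⋯b_{k'-1}(b_{k'}-1)c_1⋯c_{k-k'-1}`, and moreover the longest suffix of `𝕒`
that is a prefix of `𝕔` is exactly the one starting at position `k'+1`. -/
theorem stmt3 (b : ℝ) (hb : 1 < b) (k : ℕ) (hk : 2 ≤ k)
    (c : ℕ → ℤ)
    (hc : ∀ j, ∀ᶠ ε in nhdsWithin (0 : ℝ) (Set.Ioi 0), bdig b j (1 - ε) = c j)
    (d' : ℤ) (hd' : IsLeast {z : ℤ | ∃ j, c j = z} d')
    (d : ℤ) (hd0 : 0 ≤ d) (hdd' : d ≤ d')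
    (a bb : ℕ → ℤ) (hcons : bConsecutive b (k - 1) a bb)
    (haE : memE b k d a) (hbE : memE b k d bb) :
    ∃ p : ℕ, p + 1 < k - 1 ∧ bb p ≠ 0 ∧
      (∀ j, p < j → j < k - 1 → bb j = 0) ∧
      (∀ j < p, a j = bb j) ∧ a p = bb p - 1 ∧
      (∀ m, p + 1 + m < k - 1 → a (p + 1 + m) = c m) ∧
      (∀ ℓ ≤ p, ¬ ∀ m, ℓ + m < k - 1 → a (ℓ + m) = c m) :=
  stmt3_general b hb k c hc d' hd' d hdd' a bb hcons haE
end
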